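/- Fix integers k ≥ 1, j ≥ 0 and s ≥ 0 with 2s ≤ k−1. Let A be the set of n = 3(k+2j+1)+1 distinct lines of the real projective plane consisting of: the line z = 0, and the lines x = c·z, y = c·z, and x + y = c·z for each integer −j ≤ c ≤ k+j (the arrangement A_{A2}^{[−j,k+j]}). Let H be any one of the three lines x = (k+j−s)·z, y = (k+j−s)·z, x + y = (s−j)·z, each of which belongs to A. Then the set of intersection points {H ∩ K : K ∈ A, K ≠ H} has exactly 2k+3j+2−s elements. (Equivalently, t_{A,H} = k+3j+1+s; by the splitting-type criterion this gives T_A|_H ≅ O_H(−2k−3j−1+s) ⊕ O_H(−k−3j−2−s).) -/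

import Mathlib

/-!
The linear maps `(x, y, z) ↦ (y, x, z)` and `(x, y, z) ↦ (kz - x - y, y, z)` are involutive
symmetries of the arrangement, and they carry the line `x = mz`, `m = k + j - s`, to the other
two candidate lines; so only the points on `x = mz` have to be counted. The line `z = 0` and all
other vertical lines meet it in `(0 : 1 : 0)`. The line `y = cz` meets it in `(m : c : 1)`, the
line `x + y = cz` in `(m : c - m : 1)`; as `0 ≤ m ≤ k + j`, the second coordinates `c` and
`c - m` together fill the interval `[-j - m, k + j]`. This gives
`1 + (k + 2j + m + 1) = 2k + 3j + 2 - s` points.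
-/

noncomputable section

/-- The projective line `{a·x + b·y + c·z = 0}` regarded as the 2-dimensional subspace
of `ℝ³` cut out by the linear form with coefficients `a, b, c`. -/
def lineL (a b c : ℝ) : Submodule ℝ (Fin 3 → ℝ) :=
  LinearMap.ker
    ((a • LinearMap.proj 0 + b • LinearMap.proj 1 + c • LinearMap.proj 2 :
      (Fin 3 → ℝ) →ₗ[ℝ] ℝ))

/-- The grid arrangement: the line at infinity `z = 0` together with the lines
`x = s·z` and `y = s·z` for integers `-j ≤ s ≤ k+j`. -/
def gridLines (k j : ℕ) : Set (Submodule ℝ (Fin 3 → ℝ)) :=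
  {lineL 0 0 1} ∪
    {L | ∃ s : ℤ, -(j : ℤ) ≤ s ∧ s ≤ (k : ℤ) + j ∧
      (L = lineL 1 0 (-(s : ℝ)) ∨ L = lineL 0 1 (-(s : ℝ)))}

/-- The full deformed `A2` arrangement `A_{A2}^{[-j, k+j]}`. -/
def arrA2 (k j : ℕ) : Set (Submodule ℝ (Fin 3 → ℝ)) :=
  gridLines k j ∪
    {L | ∃ c : ℤ, -(j : ℤ) ≤ c ∧ c ≤ (k : ℤ) + j ∧ L = lineL 1 1 (-(c : ℝ))}

open Matrix Set Function

theorem ncard_image_inf_diff_of_involutive {α : Type*} [SemilatticeInf α] {f : α → α}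
    (hf : Involutive f) (hinf : ∀ a b, f (a ⊓ b) = f a ⊓ f b) {A : Set α}
    (hA : MapsTo f A A) (H : α) :
    ((f H ⊓ ·) '' (A \ {f H})).ncard = ((H ⊓ ·) '' (A \ {H})).ncard := by
  have hfA : f '' A = A :=
    hA.image_subset.antisymm fun a ha => ⟨f a, hA ha, hf a⟩
  have : (f H ⊓ ·) '' (A \ {f H}) = f '' ((H ⊓ ·) '' (A \ {H})) := by
    conv_lhs => rw [← hfA, ← image_singleton, ← image_sdiff hf.injective, image_image]
    simp only [image_image, hinf]
  rw [this, ncard_image_of_injective _ hf.injective]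

theorem Submodule.comap_involutive {R M : Type*} [Semiring R] [AddCommMonoid M] [Module R M]
    {g : M →ₗ[R] M} (hg : Involutive g) : Involutive (Submodule.comap g) :=
  fun K => by ext v; simp [hg v]

theorem mem_lineL {a b c : ℝ} {v : Fin 3 → ℝ} :
    v ∈ lineL a b c ↔ a * v 0 + b * v 1 + c * v 2 = 0 := by
  simp [lineL]

theorem mem_lineL_iff_dotProduct {a b c : ℝ} {v : Fin 3 → ℝ} :
    v ∈ lineL a b c ↔ ![a, b, c] ⬝ᵥ v = 0 := by
  rw [mem_lineL, vec3_dotProduct]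
  rfl

theorem comap_lineL {a b c a' b' c' r : ℝ} {g : (Fin 3 → ℝ) →ₗ[ℝ] Fin 3 → ℝ} (hr : r ≠ 0)
    (h : ∀ v, a * g v 0 + b * g v 1 + c * g v 2 = r * (a' * v 0 + b' * v 1 + c' * v 2)) :
    (lineL a b c).comap g = lineL a' b' c' := by
  ext v
  simp [mem_lineL, h, hr]

theorem lineL_inf_lineL {a b c a' b' c' r : ℝ} {w : Fin 3 → ℝ} (hr : r ≠ 0) (hw : w ≠ 0)
    (h : ![a, b, c] ⨯₃ ![a', b', c'] = r • w) :
    lineL a b c ⊓ lineL a' b' c' = ℝ ∙ w := by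
  rw [← Submodule.span_singleton_smul_eq (IsUnit.mk0 r hr) w, ← h]
  set n : Fin 3 → ℝ := ![a, b, c]
  set n' : Fin 3 → ℝ := ![a', b', c']
  set d := n ⨯₃ n'
  have hd : d ⬝ᵥ d ≠ 0 := by
    rw [Ne, dotProduct_self_eq_zero]; exact h ▸ smul_ne_zero hr hw
  ext v
  simp only [Submodule.mem_inf, mem_lineL_iff_dotProduct, Submodule.mem_span_singleton]
  constructor
  · rintro ⟨hv, hv'⟩
    -- `v ⊥ n, n'` gives `v ⨯₃ d = 0`; expanding `d ⨯₃ (v ⨯₃ d) = 0` then shows `v ∥ d`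
    have hvd : v ⨯₃ d = 0 := by
      rw [cross_cross_eq_smul_sub_smul', dotProduct_comm v n', hv', hv, zero_smul, zero_smul,
        sub_zero]
    have := cross_cross_eq_smul_sub_smul' d v d
    rw [hvd, map_zero, eq_comm, sub_eq_zero] at this
    refine ⟨(v ⬝ᵥ d) / (d ⬝ᵥ d), ?_⟩
    rw [div_eq_inv_mul, mul_smul, ← this, inv_smul_smul₀ hd]
  · rintro ⟨t, rfl⟩
    exact ⟨by rw [dotProduct_smul, dot_self_cross, smul_zero],
      by rw [dotProduct_smul, dot_cross_self, smul_zero]⟩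

def vertLine (c : ℝ) : Submodule ℝ (Fin 3 → ℝ) := lineL 1 0 (-c)
def horizLine (c : ℝ) : Submodule ℝ (Fin 3 → ℝ) := lineL 0 1 (-c)
def antidiagLine (c : ℝ) : Submodule ℝ (Fin 3 → ℝ) := lineL 1 1 (-c)
def lineAtInfinity : Submodule ℝ (Fin 3 → ℝ) := lineL 0 0 1

def affinePoint (x y : ℝ) : Submodule ℝ (Fin 3 → ℝ) := ℝ ∙ ![x, y, 1]
def vertPointAtInfinity : Submodule ℝ (Fin 3 → ℝ) := ℝ ∙ ![0, 1, 0]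

theorem arrA2_eq (k j : ℕ) :
    arrA2 k j = insert lineAtInfinity
      ((fun c : ℤ => vertLine c) '' Icc (-j) (k + j) ∪
        (fun c : ℤ => horizLine c) '' Icc (-j) (k + j) ∪
        (fun c : ℤ => antidiagLine c) '' Icc (-j) (k + j)) := by
  ext L
  simp only [arrA2, gridLines, mem_union, mem_insert_iff, mem_singleton_iff, mem_ofPred_eq,
    mem_image, mem_Icc, vertLine, horizLine, antidiagLine, lineAtInfinity]
  grind

section Membership

variable {k j : ℕ} {c : ℤ}

theorem vertLine_mem_arrA2 (hc : c ∈ Icc (-(j : ℤ)) (k + j)) : vertLine c ∈ arrA2 k j :=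
  Or.inl (Or.inr ⟨c, hc.1, hc.2, Or.inl rfl⟩)

theorem horizLine_mem_arrA2 (hc : c ∈ Icc (-(j : ℤ)) (k + j)) : horizLine c ∈ arrA2 k j :=
  Or.inl (Or.inr ⟨c, hc.1, hc.2, Or.inr rfl⟩)

theorem antidiagLine_mem_arrA2 (hc : c ∈ Icc (-(j : ℤ)) (k + j)) : antidiagLine c ∈ arrA2 k j :=
  Or.inr ⟨c, hc.1, hc.2, rfl⟩

end Membership

theorem lineAtInfinity_mem_arrA2 (k j : ℕ) : lineAtInfinity ∈ arrA2 k j := Or.inl (Or.inl rfl)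

theorem lineL_ne_of_mem {a b c a' b' c' : ℝ} (v : Fin 3 → ℝ) (hv : a * v 0 + b * v 1 + c * v 2 = 0)
    (hv' : a' * v 0 + b' * v 1 + c' * v 2 ≠ 0) : lineL a b c ≠ lineL a' b' c' :=
  fun h => hv' (mem_lineL.1 (h ▸ mem_lineL.2 hv))

theorem vertLine_injective : Injective vertLine := fun c c' h => by
  by_contra hc
  exact lineL_ne_of_mem ![c, 0, 1] (by simp) (by simp; exact sub_ne_zero.2 hc) h

theorem horizLine_injective : Injective horizLine := fun c c' h => by
  by_contra hc
  exact lineL_ne_of_mem ![0, c, 1] (by simp) (by simp; exact sub_ne_zero.2 hc) h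

theorem antidiagLine_injective : Injective antidiagLine := fun c c' h => by
  by_contra hc
  exact lineL_ne_of_mem ![c, 0, 1] (by simp) (by simp; exact sub_ne_zero.2 hc) h

theorem vertLine_ne_horizLine (c c' : ℝ) : vertLine c ≠ horizLine c' :=
  lineL_ne_of_mem ![c, c' + 1, 1] (by simp) (by simp)

theorem vertLine_ne_antidiagLine (c c' : ℝ) : vertLine c ≠ antidiagLine c' :=
  lineL_ne_of_mem ![c, c' - c + 1, 1] (by simp) (by simp; ring_nf; simp)

theorem horizLine_ne_antidiagLine (c c' : ℝ) : horizLine c ≠ antidiagLine c' :=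
  lineL_ne_of_mem ![c' - c + 1, c, 1] (by simp) (by simp; ring_nf; simp)

theorem lineAtInfinity_ne_vertLine (c : ℝ) : lineAtInfinity ≠ vertLine c :=
  lineL_ne_of_mem ![1, 0, 0] (by simp) (by simp)

theorem lineAtInfinity_ne_horizLine (c : ℝ) : lineAtInfinity ≠ horizLine c :=
  lineL_ne_of_mem ![0, 1, 0] (by simp) (by simp)

theorem lineAtInfinity_ne_antidiagLine (c : ℝ) : lineAtInfinity ≠ antidiagLine c :=
  lineL_ne_of_mem ![1, 0, 0] (by simp) (by simp)

theorem ncard_arrA2 (k j : ℕ) : (arrA2 k j).ncard = 3 * (k + 2 * j + 1) + 1 := by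
  have hcard : (Icc (-(j : ℤ)) (k + j)).ncard = k + 2 * j + 1 := by
    rw [← Finset.coe_Icc, ncard_coe_finset, Int.card_Icc]; omega
  set S := Icc (-(j : ℤ)) (k + j)
  have hS : S.Finite := finite_Icc _ _
  have hinj {f : ℝ → Submodule ℝ (Fin 3 → ℝ)} (hf : Injective f) :
      ((fun c : ℤ => f c) '' S).ncard = k + 2 * j + 1 :=
    (ncard_image_of_injective S (hf.comp Int.cast_injective)).trans hcard
  have hXY : Disjoint ((fun c : ℤ => vertLine c) '' S) ((fun c : ℤ => horizLine c) '' S) := by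
    rw [disjoint_left]
    rintro _ ⟨c, _, rfl⟩ ⟨c', _, h⟩
    exact vertLine_ne_horizLine c c' h.symm
  have hXYD : Disjoint ((fun c : ℤ => vertLine c) '' S ∪ (fun c : ℤ => horizLine c) '' S)
      ((fun c : ℤ => antidiagLine c) '' S) := by
    rw [disjoint_left]
    rintro _ (⟨c, _, rfl⟩ | ⟨c, _, rfl⟩) ⟨c', _, h⟩
    · exact vertLine_ne_antidiagLine c c' h.symm
    · exact horizLine_ne_antidiagLine c c' h.symm
  have hInf : lineAtInfinity ∉ (fun c : ℤ => vertLine c) '' S ∪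
      (fun c : ℤ => horizLine c) '' S ∪ (fun c : ℤ => antidiagLine c) '' S := by
    rintro ((⟨c, _, h⟩ | ⟨c, _, h⟩) | ⟨c, _, h⟩)
    · exact lineAtInfinity_ne_vertLine c h.symm
    · exact lineAtInfinity_ne_horizLine c h.symm
    · exact lineAtInfinity_ne_antidiagLine c h.symm
  rw [arrA2_eq, ncard_insert_of_notMem hInf (((hS.image _).union (hS.image _)).union (hS.image _)),
    ncard_union_eq hXYD ((hS.image _).union (hS.image _)) (hS.image _),
    ncard_union_eq hXY (hS.image _) (hS.image _), hinj vertLine_injective,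
    hinj horizLine_injective, hinj antidiagLine_injective]
  ring

def swapXY : (Fin 3 → ℝ) →ₗ[ℝ] Fin 3 → ℝ := LinearMap.funLeft ℝ ℝ (Equiv.swap 0 1)

def reflectX (r : ℝ) : (Fin 3 → ℝ) →ₗ[ℝ] Fin 3 → ℝ where
  toFun v := ![r * v 2 - v 0 - v 1, v 1, v 2]
  map_add' v w := by ext i; fin_cases i <;> simp; ring
  map_smul' t v := by ext i; fin_cases i <;> simp; ring

theorem swapXY_apply (v : Fin 3 → ℝ) : swapXY v = ![v 1, v 0, v 2] := by
  ext i; fin_cases i <;> simp [swapXY, LinearMap.funLeft_apply, Equiv.swap_apply_of_ne_of_ne]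

theorem swapXY_involutive : Involutive swapXY := fun v => by
  ext i; fin_cases i <;> simp [swapXY_apply]

theorem reflectX_involutive (r : ℝ) : Involutive (reflectX r) := fun v => by
  ext i; fin_cases i <;> simp [reflectX]; ring

section Symmetry

variable (c r : ℝ)

theorem comap_swapXY_vertLine : (vertLine c).comap swapXY = horizLine c :=
  comap_lineL one_ne_zero fun v => by simp [swapXY_apply]

theorem comap_swapXY_horizLine : (horizLine c).comap swapXY = vertLine c :=
  comap_lineL one_ne_zero fun v => by simp [swapXY_apply]

theorem comap_swapXY_antidiagLine : (antidiagLine c).comap swapXY = antidiagLine c :=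
  comap_lineL one_ne_zero fun v => by simp [swapXY_apply]; ring

theorem comap_swapXY_lineAtInfinity : lineAtInfinity.comap swapXY = lineAtInfinity :=
  comap_lineL one_ne_zero fun v => by simp [swapXY_apply]

theorem comap_reflectX_vertLine : (vertLine c).comap (reflectX r) = antidiagLine (r - c) :=
  comap_lineL (neg_ne_zero.2 one_ne_zero) fun v => by simp [reflectX]; ring

theorem comap_reflectX_horizLine : (horizLine c).comap (reflectX r) = horizLine c :=
  comap_lineL one_ne_zero fun v => by simp [reflectX]

theorem comap_reflectX_antidiagLine : (antidiagLine c).comap (reflectX r) = vertLine (r - c) :=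
  comap_lineL (neg_ne_zero.2 one_ne_zero) fun v => by simp [reflectX]; ring

theorem comap_reflectX_lineAtInfinity : lineAtInfinity.comap (reflectX r) = lineAtInfinity :=
  comap_lineL one_ne_zero fun v => by simp [reflectX]

end Symmetry

theorem mapsTo_comap_swapXY_arrA2 (k j : ℕ) :
    MapsTo (Submodule.comap swapXY) (arrA2 k j) (arrA2 k j) := by
  intro K hK
  rw [arrA2_eq] at hK
  rcases hK with rfl | ((⟨c, hc, rfl⟩ | ⟨c, hc, rfl⟩) | ⟨c, hc, rfl⟩)
  · rw [comap_swapXY_lineAtInfinity]; exact lineAtInfinity_mem_arrA2 k j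
  · rw [comap_swapXY_vertLine]; exact horizLine_mem_arrA2 hc
  · rw [comap_swapXY_horizLine]; exact vertLine_mem_arrA2 hc
  · rw [comap_swapXY_antidiagLine]; exact antidiagLine_mem_arrA2 hc

theorem mapsTo_comap_reflectX_arrA2 (k j : ℕ) :
    MapsTo (Submodule.comap (reflectX k)) (arrA2 k j) (arrA2 k j) := by
  have hk {c : ℤ} (hc : c ∈ Icc (-(j : ℤ)) (k + j)) : k - c ∈ Icc (-(j : ℤ)) (k + j) := by
    simp only [mem_Icc] at hc ⊢; omega
  intro K hK
  rw [arrA2_eq] at hK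
  rcases hK with rfl | ((⟨c, hc, rfl⟩ | ⟨c, hc, rfl⟩) | ⟨c, hc, rfl⟩)
  · rw [comap_reflectX_lineAtInfinity]; exact lineAtInfinity_mem_arrA2 k j
  · rw [comap_reflectX_vertLine]; exact_mod_cast antidiagLine_mem_arrA2 (hk hc)
  · rw [comap_reflectX_horizLine]; exact horizLine_mem_arrA2 hc
  · rw [comap_reflectX_antidiagLine]; exact_mod_cast vertLine_mem_arrA2 (hk hc)

section VerticalLine

variable (m c : ℝ)

theorem vertLine_inf_lineAtInfinity : vertLine m ⊓ lineAtInfinity = vertPointAtInfinity :=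
  lineL_inf_lineL (r := -1) (by norm_num) (by simp) (by ext i; fin_cases i <;> simp [cross_apply])

theorem vertLine_inf_horizLine : vertLine m ⊓ horizLine c = affinePoint m c :=
  lineL_inf_lineL one_ne_zero (by simp) (by ext i; fin_cases i <;> simp [cross_apply])

theorem vertLine_inf_antidiagLine : vertLine m ⊓ antidiagLine c = affinePoint m (c - m) :=
  lineL_inf_lineL one_ne_zero (by simp) (by ext i; fin_cases i <;> simp [cross_apply]; ring)

end VerticalLine

theorem vertLine_inf_vertLine {m c : ℝ} (h : m ≠ c) :
    vertLine m ⊓ vertLine c = vertPointAtInfinity :=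
  lineL_inf_lineL (r := c - m) (sub_ne_zero.2 h.symm) (by simp)
    (by ext i; fin_cases i <;> simp [cross_apply]; ring)

theorem affinePoint_injective (x : ℝ) : Injective (affinePoint x) := fun y y' h => by
  obtain ⟨t, ht⟩ := Submodule.mem_span_singleton.1 (h ▸ Submodule.mem_span_singleton_self _ :
    ![x, y, 1] ∈ affinePoint x y')
  have ht₁ : t = 1 := by simpa using congrFun ht 2
  simpa [ht₁, eq_comm] using congrFun ht 1

theorem vertPointAtInfinity_ne_affinePoint (x y : ℝ) : vertPointAtInfinity ≠ affinePoint x y :=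
  fun h => by
  obtain ⟨t, ht⟩ := Submodule.mem_span_singleton.1 (h ▸ Submodule.mem_span_singleton_self _ :
    ![x, y, 1] ∈ vertPointAtInfinity)
  simpa using congrFun ht 2

theorem image_vertLine_inf_arrA2 {k j m : ℕ} (hm : m ≤ k + j) :
    (vertLine m ⊓ ·) '' (arrA2 k j \ {vertLine m}) =
      insert vertPointAtInfinity
        ((fun t : ℤ => affinePoint m t) '' Icc (-(j : ℤ) - m) (k + j)) := by
  ext P
  constructor
  · rintro ⟨K, ⟨hK, hKm⟩, rfl⟩
    rw [arrA2_eq] at hK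
    rcases hK with rfl | ((⟨c, ⟨hc₁, hc₂⟩, rfl⟩ | ⟨c, ⟨hc₁, hc₂⟩, rfl⟩) | ⟨c, ⟨hc₁, hc₂⟩, rfl⟩) <;>
      dsimp only
    · rw [vertLine_inf_lineAtInfinity]; exact mem_insert _ _
    · rw [vertLine_inf_vertLine fun h => hKm (by rw [h]; rfl)]; exact mem_insert _ _
    · rw [vertLine_inf_horizLine]; exact mem_insert_of_mem _ ⟨c, ⟨by omega, hc₂⟩, rfl⟩
    · rw [vertLine_inf_antidiagLine]
      exact mem_insert_of_mem _ ⟨c - m, ⟨by omega, by omega⟩, by push_cast; rfl⟩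
  · have hK {K : Submodule ℝ (Fin 3 → ℝ)} (hK : K ∈ arrA2 k j) (hKm : K ≠ vertLine m) :
        vertLine m ⊓ K ∈ (vertLine m ⊓ ·) '' (arrA2 k j \ {vertLine m}) :=
      ⟨K, ⟨hK, hKm⟩, rfl⟩
    rintro (rfl | ⟨t, ⟨ht₁, ht₂⟩, rfl⟩)
    · rw [← vertLine_inf_lineAtInfinity m]
      exact hK (lineAtInfinity_mem_arrA2 k j) (lineAtInfinity_ne_vertLine m)
    · -- the points `(m, t)` with `t < -j` lie on the antidiagonal lines `x + y = m + t`
      dsimp only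
      by_cases htj : -(j : ℤ) ≤ t
      · rw [← vertLine_inf_horizLine]
        exact hK (horizLine_mem_arrA2 ⟨htj, ht₂⟩) (vertLine_ne_horizLine _ _).symm
      · have : (t : ℝ) = ((m + t : ℤ) : ℝ) - m := by push_cast; ring
        rw [this, ← vertLine_inf_antidiagLine]
        exact hK (antidiagLine_mem_arrA2 ⟨by omega, by omega⟩) (vertLine_ne_antidiagLine _ _).symm

theorem ncard_image_vertLine_inf_arrA2 {k j m : ℕ} (hm : m ≤ k + j) :
    ((vertLine m ⊓ ·) '' (arrA2 k j \ {vertLine m})).ncard = k + 2 * j + m + 2 := by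
  have hnot : vertPointAtInfinity ∉ (fun t : ℤ => affinePoint m t) '' Icc (-(j : ℤ) - m) (k + j) :=
    fun ⟨t, _, h⟩ => vertPointAtInfinity_ne_affinePoint _ _ h.symm
  rw [image_vertLine_inf_arrA2 hm, ncard_insert_of_notMem hnot ((finite_Icc _ _).image _),
    ncard_image_of_injective (f := fun t : ℤ => affinePoint m t) _
      ((affinePoint_injective _).comp Int.cast_injective),
    ← Finset.coe_Icc, ncard_coe_finset, Int.card_Icc]
  omega

theorem jumping_line_in_arrangement_general (k j s : ℕ) (hs : 2 * s ≤ k - 1)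
    (H : Submodule ℝ (Fin 3 → ℝ))
    (hH : H = lineL 1 0 (-((k : ℝ) + j - s)) ∨ H = lineL 0 1 (-((k : ℝ) + j - s)) ∨
      H = lineL 1 1 (-((s : ℝ) - j))) :
    (arrA2 k j).ncard = 3 * (k + 2 * j + 1) + 1 ∧
    H ∈ arrA2 k j ∧
    ((fun K => H ⊓ K) '' (arrA2 k j \ {H})).ncard = 2 * k + 3 * j + 2 - s := by
  have hsk : s ≤ k + j := by omega
  have hm : ((k + j - s : ℕ) : ℝ) = (k : ℝ) + j - s := by push_cast [hsk]; ring
  obtain ⟨g, hg, hgA, rfl⟩ : ∃ g : (Fin 3 → ℝ) →ₗ[ℝ] Fin 3 → ℝ, Involutive g ∧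
      MapsTo (Submodule.comap g) (arrA2 k j) (arrA2 k j) ∧
      H = (vertLine (k + j - s : ℕ)).comap g := by
    rcases hH with rfl | rfl | rfl
    · exact ⟨LinearMap.id, fun _ => rfl, fun _ => id, by rw [Submodule.comap_id, hm]; rfl⟩
    · exact ⟨swapXY, swapXY_involutive, mapsTo_comap_swapXY_arrA2 k j,
        by rw [comap_swapXY_vertLine, hm]; rfl⟩
    · refine ⟨reflectX k, reflectX_involutive k, mapsTo_comap_reflectX_arrA2 k j, ?_⟩
      rw [comap_reflectX_vertLine, hm]; congr 2; ring
  refine ⟨ncard_arrA2 k j, hgA (vertLine_mem_arrA2 ⟨by omega, by omega⟩), ?_⟩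
  rw [ncard_image_inf_diff_of_involutive (Submodule.comap_involutive hg)
    (fun _ _ => Submodule.comap_inf _ _ _) hgA, ncard_image_vertLine_inf_arrA2 (Nat.sub_le _ _)]
  omega

/-- For `0 ≤ 2s ≤ k-1` and `H` one of the lines `x = (k+j-s)z`, `y = (k+j-s)z`,
`x + y = (s-j)z` of the arrangement, the set of intersection points of `H` with the
other lines has exactly `2k+3j+2-s` elements (so `t_{A,H} = k+3j+1+s`). -/
theorem jumping_line_in_arrangement (k j s : ℕ) (hk : 1 ≤ k) (hs : 2 * s ≤ k - 1)
    (H : Submodule ℝ (Fin 3 → ℝ))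
    (hH : H = lineL 1 0 (-((k : ℝ) + j - s)) ∨ H = lineL 0 1 (-((k : ℝ) + j - s)) ∨
      H = lineL 1 1 (-((s : ℝ) - j))) :
    (arrA2 k j).ncard = 3 * (k + 2 * j + 1) + 1 ∧
    H ∈ arrA2 k j ∧
    ((fun K => H ⊓ K) '' (arrA2 k j \ {H})).ncard = 2 * k + 3 * j + 2 - s :=
  jumping_line_in_arrangement_general k j s hs H hH
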